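/- Let a be a positive integer divisible by 4, let K be a complete nonarchimedean valued field extension of ℚ_7 with valuation ord_7 normalized by ord_7(7) = 1, and let M_1, …, M_a be matrices with rows and columns indexed by positive integers, with entries in the ring of integers of K, such that ord_7((M_ℓ)_{ij}) ≥ g_{ij} for all ℓ = 1, …, a and all i, j ≥ 1, where g_{ij} is defined as follows: set n = 7i − j; g_{ij} = +∞ if n < 0 (i.e., (M_ℓ)_{ij} = 0); g_{ij} = n/12 − (⌊n/5⌋ − 1)/4 if n ≥ 0 and n ≡ 1, 3 (mod 5); g_{ij} = n/12 − ⌊n/5⌋/4 if n ≥ 0 and n ≡ 0, 2, 4 (mod 5). Then the product M_1⋯M_a (whose entries are given by convergent series, convergence following from the growth of g_{ij}) satisfies ord_7((M_1⋯M_a)_{ij}) > 5a/12 + (i−j)/12 for all i, j ≥ 1. -/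
import Mathlib


/-!
STATEMENT 10 (Lemma 3.1): Let `4 ∣ a`, `a > 0`, `K` a complete nonarchimedean valued
extension of `ℚ_7` with valuation `ord_7` (`ord_7 7 = 1`), and `M_1, …, M_a` matrices
indexed by positive integers, with entries in the ring of integers of `K`, such that
`ord_7 (M_ℓ)_{ij} ≥ g_{ij}` where (with `n = 7i − j`): `g_{ij} = +∞` if `n < 0`
(i.e. `(M_ℓ)_{ij} = 0`), `g_{ij} = n/12 − (⌊n/5⌋−1)/4` if `n ≥ 0`, `n ≡ 1,3 (mod 5)`,
`g_{ij} = n/12 − ⌊n/5⌋/4` if `n ≥ 0`, `n ≡ 0,2,4 (mod 5)`.  Then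
`ord_7 (M_1⋯M_a)_{ij} > 5a/12 + (i−j)/12` for all `i, j ≥ 1`.

Since `(M_ℓ)_{ik} = 0` whenever `k > 7i`, the entry `(M_1⋯M_a)_{ij}` — a priori a
convergent series over paths `i = k_0, k_1, …, k_{a-1}, k_a = j` — is in fact the
*finite* sum over paths with all intermediate indices in `[1, 7^a · max i j]`, which
is how `matProd` below defines it.
-/

open scoped BigOperators

local instance fact7 : Fact (Nat.Prime 7) := ⟨by norm_num⟩

/-- The lower bound `g_{ij}` for `ord_7 G_{7i−j}` for the polynomial `x⁵ + c·x²`. -/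
noncomputable def g7 (i j : ℕ) : WithTop ℝ :=
  let n : ℤ := 7 * i - j
  if n < 0 then ⊤
  else if n % 5 = 1 ∨ n % 5 = 3 then
    (((n : ℝ) / 12 - (((n / 5 : ℤ) : ℝ) - 1) / 4 : ℝ) : WithTop ℝ)
  else (((n : ℝ) / 12 - ((n / 5 : ℤ) : ℝ) / 4 : ℝ) : WithTop ℝ)

/-- The `(i,j)` entry of the product `M_0 ⋯ M_{a-1}` of matrices indexed by the
positive integers: the sum over all paths `k : Fin (a+1) → ℕ` with `k 0 = i`,
`k a = j` and all nodes in `[1, B · max i j]` of the products of the corresponding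
entries.  (For row-finite matrices — entries vanishing for `j > 7i`, say, with
`7^a ≤ B` — this equals the full, convergent, sum over all paths.) -/
def matProd {K : Type*} [CommRing K] (a B : ℕ) (M : Fin a → ℕ → ℕ → K)
    (i j : ℕ) : K :=
  ∑ k ∈ (Fintype.piFinset fun _ : Fin (a + 1) => Finset.Icc 1 (B * max i j)).filter
      (fun k => k 0 = i ∧ k (Fin.last a) = j),
    ∏ t : Fin a, M t (k t.castSucc) (k t.succ)

/-- The numerator correction `c(r)` of `60·g_{ij} = 2n + c(n % 5)`. -/
def c5 (r : ℤ) : ℤ :=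
  if r = 1 then 18 else if r = 2 then 6 else if r = 3 then 24 else if r = 4 then 12 else 0

/-- A potential function on residues mod 5 used for the telescoping bound. -/
def phi5 (r : ℤ) : ℤ := if r = 2 ∨ r = 4 then -15 else 0

lemma c5_nonneg (r : ℤ) : 0 ≤ c5 r := by unfold c5; split_ifs <;> omega

set_option maxHeartbeats 1000000 in
lemma step_ineq (x y : ℤ) (hx : 1 ≤ x) (hy : 1 ≤ y) :
    30 + phi5 (y % 5) - phi5 (x % 5) ≤ 9*x + 3*y + c5 ((7*x - y) % 5) := by
  unfold c5 phi5
  have hx5 : x % 5 = 0 ∨ x % 5 = 1 ∨ x % 5 = 2 ∨ x % 5 = 3 ∨ x % 5 = 4 := by omega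
  have hy5 : y % 5 = 0 ∨ y % 5 = 1 ∨ y % 5 = 2 ∨ y % 5 = 3 ∨ y % 5 = 4 := by omega
  rcases hx5 with h1|h1|h1|h1|h1 <;> rcases hy5 with h2|h2|h2|h2|h2 <;>
    split_ifs <;> omega

lemma key_sum (a : ℕ) (ha : 4 ≤ a) (N : ℕ → ℤ) (hN : ∀ m, 1 ≤ N m) :
    25*(a:ℤ) + 5*(N 0) + 1 - 5*(N a) ≤
      ∑ m ∈ Finset.range a, (2*(7*N m - N (m+1)) + c5 ((7*N m - N (m+1)) % 5)) := by
  have hphi : ∀ r : ℤ, -15 ≤ phi5 r ∧ phi5 r ≤ 0 := fun r => by unfold phi5; split_ifs <;> omega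
  set ψ : ℕ → ℤ := fun m => phi5 (N m % 5) - 5 * N m with hψ
  have hstep : ∀ m ∈ Finset.range a,
      30 + (ψ (m+1) - ψ m) ≤ 2*(7*N m - N (m+1)) + c5 ((7*N m - N (m+1)) % 5) := by
    intro m _
    have h := step_ineq (N m) (N (m+1)) (hN m) (hN (m+1))
    simp only [hψ]
    linarith
  have h1 := Finset.sum_le_sum hstep
  have htel := Finset.sum_range_sub ψ a
  rw [Finset.sum_add_distrib, htel, Finset.sum_const, Finset.card_range] at h1
  have h0 := hphi (N 0 % 5)
  have hA := hphi (N a % 5)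
  simp only [hψ, nsmul_eq_mul] at h1
  have ha' : (4:ℤ) ≤ (a:ℤ) := by exact_mod_cast ha
  linarith

lemma g7_eq (i j : ℕ) (h : (j:ℤ) ≤ 7 * (i:ℤ)) :
    g7 i j = ((((2*(7*(i:ℤ) - (j:ℤ)) + c5 ((7*(i:ℤ) - (j:ℤ)) % 5) : ℤ) : ℝ) / 60 : ℝ) : WithTop ℝ) := by
  unfold g7
  set n : ℤ := 7*(i:ℤ) - (j:ℤ) with hn
  have hn0 : ¬ (n < 0) := by omega
  rw [if_neg hn0]
  have hq : n = 5 * (n / 5) + n % 5 := (Int.mul_ediv_add_emod n 5).symm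
  have hr : n % 5 = 0 ∨ n % 5 = 1 ∨ n % 5 = 2 ∨ n % 5 = 3 ∨ n % 5 = 4 := by omega
  have hqr : (n:ℝ) = 5 * ((n / 5 : ℤ) : ℝ) + ((n % 5 : ℤ) : ℝ) := by exact_mod_cast hq
  rcases hr with h5|h5|h5|h5|h5 <;>
    · rw [h5] at hqr ⊢
      first
        | rw [if_pos (show (1:ℤ) = 1 ∨ (1:ℤ) = 3 from Or.inl rfl)]
        | rw [if_pos (show (3:ℤ) = 1 ∨ (3:ℤ) = 3 from Or.inr rfl)]
        | rw [if_neg (by norm_num : ¬((0:ℤ) = 1 ∨ (0:ℤ) = 3))]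
        | rw [if_neg (by norm_num : ¬((2:ℤ) = 1 ∨ (2:ℤ) = 3))]
        | rw [if_neg (by norm_num : ¬((4:ℤ) = 1 ∨ (4:ℤ) = 3))]
      refine congrArg (fun r : ℝ => (r : WithTop ℝ)) ?_
      norm_num [c5]
      linarith

lemma g7_top (i j : ℕ) (h : 7 * (i:ℤ) < (j:ℤ)) : g7 i j = ⊤ := by
  unfold g7
  rw [if_pos (by omega : 7 * (i:ℤ) - (j:ℤ) < 0)]

lemma v_prod {K : Type*} [Field K] (v : K → WithTop ℝ)
    (hv_mul : ∀ x y, v (x * y) = v x + v y) (hv1 : v 1 = 0)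
    {ι : Type*} (s : Finset ι) (f : ι → K) :
    v (∏ t ∈ s, f t) = ∑ t ∈ s, v (f t) := by
  classical
  induction s using Finset.cons_induction with
  | empty => simpa using hv1
  | cons x s hx ih => rw [Finset.prod_cons, Finset.sum_cons, hv_mul, ih]

lemma v_sum_lt {K : Type*} [Field K] (v : K → WithTop ℝ)
    (hv0 : ∀ x, v x = ⊤ ↔ x = 0) (hv_add : ∀ x y, min (v x) (v y) ≤ v (x + y))
    {ι : Type*} (s : Finset ι) (f : ι → K) (B : ℝ)
    (h : ∀ x ∈ s, (B : WithTop ℝ) < v (f x)) :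
    (B : WithTop ℝ) < v (∑ x ∈ s, f x) := by
  classical
  induction s using Finset.cons_induction with
  | empty =>
      rw [Finset.sum_empty, (hv0 0).mpr rfl]
      exact WithTop.coe_lt_top B
  | cons x s hx ih =>
      rw [Finset.sum_cons]
      refine lt_of_lt_of_le ?_ (hv_add _ _)
      exact lt_min (h x (Finset.mem_cons_self _ _))
        (ih fun y hy => h y (Finset.mem_cons.mpr (Or.inr hy)))

theorem seven_matrix_product_valuation_bound
    (K : Type*) [Field K] [Algebra ℚ_[7] K]
    (v : K → WithTop ℝ)
    (hv0 : ∀ x, v x = ⊤ ↔ x = 0)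
    (hv_mul : ∀ x y, v (x * y) = v x + v y)
    (hv_add : ∀ x y, min (v x) (v y) ≤ v (x + y))
    (hv7 : v (7 : K) = 1)
    (a : ℕ) (ha : 0 < a) (hdvd : 4 ∣ a)
    (M : Fin a → ℕ → ℕ → K)
    (hint : ∀ (ℓ : Fin a) (i j : ℕ), 1 ≤ i → 1 ≤ j → (0 : WithTop ℝ) ≤ v (M ℓ i j))
    (hM : ∀ (ℓ : Fin a) (i j : ℕ), 1 ≤ i → 1 ≤ j → g7 i j ≤ v (M ℓ i j)) :
    ∀ i j : ℕ, 1 ≤ i → 1 ≤ j →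
      ((5 * (a : ℝ) / 12 + ((i : ℝ) - (j : ℝ)) / 12 : ℝ) : WithTop ℝ) <
        v (matProd a (7 ^ a) M i j) := by
  intro i j hi hj
  have ha4 : 4 ≤ a := Nat.le_of_dvd ha hdvd
  have hv1 : v 1 = 0 := by
    have h := hv_mul 1 1
    rw [mul_one] at h
    have hne : v 1 ≠ ⊤ := fun h' => one_ne_zero ((hv0 1).mp h')
    obtain ⟨x, hx⟩ := WithTop.ne_top_iff_exists.mp hne
    rw [← hx] at h ⊢
    rw [← WithTop.coe_add, WithTop.coe_eq_coe] at h
    have : x = 0 := by linarith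
    rw [this]
    rfl
  unfold matProd
  refine v_sum_lt v hv0 hv_add _ _ _ ?_
  intro k hk
  rw [Finset.mem_filter] at hk
  obtain ⟨hmem, hk0, hka⟩ := hk
  have hk1 : ∀ t, 1 ≤ k t := fun t =>
    (Finset.mem_Icc.mp (Fintype.mem_piFinset.mp hmem t)).1
  rw [v_prod v hv_mul hv1]
  have hL : ∀ t : Fin a, g7 (k t.castSucc) (k t.succ) ⊔ 0 ≤ v (M t (k t.castSucc) (k t.succ)) :=
    fun t => sup_le (hM t _ _ (hk1 _) (hk1 _)) (hint t _ _ (hk1 _) (hk1 _))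
  refine lt_of_lt_of_le ?_ (Finset.sum_le_sum fun t _ => hL t)
  by_cases hbig : ∀ t : Fin a, ((k t.succ : ℕ) : ℤ) ≤ 7 * ((k t.castSucc : ℕ) : ℤ)
  case neg =>
    push_neg at hbig
    obtain ⟨t, ht⟩ := hbig
    have htop : g7 (k t.castSucc) (k t.succ) ⊔ 0 = ⊤ := by
      rw [g7_top _ _ ht]; simp
    rw [WithTop.sum_eq_top.mpr ⟨t, Finset.mem_univ t, htop⟩]
    exact WithTop.coe_lt_top _
  case pos =>
    set N : ℕ → ℤ := fun m => if h : m < a + 1 then ((k ⟨m, h⟩ : ℕ) : ℤ) else 1 with hNdef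
    have hN1 : ∀ m, 1 ≤ N m := by
      intro m; simp only [hNdef]; split_ifs with h
      · exact_mod_cast hk1 ⟨m, h⟩
      · exact le_refl 1
    have hNc : ∀ t : Fin a, N t.val = ((k t.castSucc : ℕ) : ℤ) := by
      intro t
      simp only [hNdef]
      rw [dif_pos (by omega : (t:ℕ) < a + 1)]
      congr 1
    have hNs : ∀ t : Fin a, N (t.val + 1) = ((k t.succ : ℕ) : ℤ) := by
      intro t
      simp only [hNdef]
      rw [dif_pos (by omega : (t:ℕ) + 1 < a + 1)]
      congr 1
    have hg : ∀ t : Fin a, g7 (k t.castSucc) (k t.succ) ⊔ 0 =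
        (((((2*(7*N t.val - N (t.val+1)) + c5 ((7*N t.val - N (t.val+1)) % 5) : ℤ) : ℝ) / 60 : ℝ)) : WithTop ℝ) := by
      intro t
      rw [hNc t, hNs t, g7_eq _ _ (hbig t)]
      have hzn : (0:ℤ) ≤ 2*(7*((k t.castSucc : ℕ):ℤ) - ((k t.succ : ℕ):ℤ))
          + c5 ((7*((k t.castSucc : ℕ):ℤ) - ((k t.succ : ℕ):ℤ)) % 5) := by
        have h1 := c5_nonneg ((7*((k t.castSucc : ℕ):ℤ) - ((k t.succ : ℕ):ℤ)) % 5)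
        have h2 := hbig t
        omega
      have hzr : (0:ℝ) ≤ (((2*(7*((k t.castSucc : ℕ):ℤ) - ((k t.succ : ℕ):ℤ))
          + c5 ((7*((k t.castSucc : ℕ):ℤ) - ((k t.succ : ℕ):ℤ)) % 5) : ℤ) : ℝ) / 60 : ℝ) := by
        apply div_nonneg _ (by norm_num)
        exact_mod_cast hzn
      rw [sup_eq_left.mpr (by exact_mod_cast hzr : (0 : WithTop ℝ) ≤ _)]
    rw [Finset.sum_congr rfl fun t _ => hg t, ← WithTop.coe_sum, WithTop.coe_lt_coe]
    rw [Fin.sum_univ_eq_sum_range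
      (fun m => ((((2*(7*N m - N (m+1)) + c5 ((7*N m - N (m+1)) % 5) : ℤ) : ℝ) / 60 : ℝ))) a]
    rw [← Finset.sum_div, ← Int.cast_sum]
    have hZ := key_sum a ha4 N hN1
    have hN0 : N 0 = (i : ℤ) := by
      simp only [hNdef]
      rw [dif_pos (by omega : 0 < a + 1)]
      rw [show (⟨0, by omega⟩ : Fin (a+1)) = 0 from rfl, hk0]
    have hNa : N a = (j : ℤ) := by
      simp only [hNdef]
      rw [dif_pos (by omega : a < a + 1)]
      rw [show (⟨a, by omega⟩ : Fin (a+1)) = Fin.last a from rfl, hka]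
    rw [hN0, hNa] at hZ
    have hZr : ((25*(a:ℤ) + 5*(i:ℤ) + 1 - 5*(j:ℤ) : ℤ) : ℝ) ≤
        ((∑ m ∈ Finset.range a, (2*(7*N m - N (m+1)) + c5 ((7*N m - N (m+1)) % 5)) : ℤ) : ℝ) := by
      exact_mod_cast hZ
    push_cast at hZr
    push_cast
    linarith
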